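/- Let γ ∈ ℝ with |γ| = 1, and let s ∈ ℝ be arbitrary. Then the estimate ‖B_γ(f,g;s)‖_{L²(ℝ×ℤ)} ≤ C ‖f‖_{L²(ℝ×ℤ)} ‖g‖_{L²(ℝ×ℤ)} fails: for every constant C > 0 there exist nonnegative functions f, g ∈ L²(ℝ×ℤ) with ‖B_γ(f,g;s)‖_{L²(ℝ×ℤ)} > C ‖f‖_{L²(ℝ×ℤ)} ‖g‖_{L²(ℝ×ℤ)}. -/

import Mathlib

open MeasureTheory ENNReal

/-- Japanese bracket `⟨x⟩ = 1 + |x|`. -/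
noncomputable def jb (x : ℝ) : ℝ := 1 + |x|

/-- The `L²(ℝ×ℤ)` norm (valued in `ℝ≥0∞`) of a nonnegative function,
with respect to the product of Lebesgue measure on `ℝ` and counting measure on `ℤ`. -/
noncomputable def l2RZ (f : ℝ × ℤ → ℝ) : ℝ≥0∞ :=
  (∑' n : ℤ, ∫⁻ τ : ℝ, ENNReal.ofReal (f (τ, n)) ^ 2) ^ (1/2 : ℝ)

/-- The bilinear form `B_γ(f,g;s)(τ,n)`, dual to the estimate
`‖uv‖_{X_{per}^{s,−1/2}} ≲ ‖u‖_{Y_{γ,per}^{s−1/2,1/2}} ‖v‖_{X_{per}^{s,1/2}}`. -/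
noncomputable def Bγ (γ s : ℝ) (f g : ℝ × ℤ → ℝ) (τ : ℝ) (n : ℤ) : ℝ≥0∞ :=
  ENNReal.ofReal (jb (n : ℝ) ^ s / jb (τ + (n : ℝ) ^ 2) ^ (1/2 : ℝ)) *
    ∑' n₁ : ℤ, ∫⁻ τ₁ : ℝ,
      ENNReal.ofReal (f (τ₁, n₁) * g (τ - τ₁, n - n₁) /
        (jb (n₁ : ℝ) ^ (s - 1/2) * jb (τ₁ + γ * |(n₁ : ℝ)| * (n₁ : ℝ)) ^ (1/2 : ℝ)
          * jb ((n : ℝ) - (n₁ : ℝ)) ^ s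
          * jb (τ - τ₁ + ((n : ℝ) - (n₁ : ℝ)) ^ 2) ^ (1/2 : ℝ)))

/-! ### Auxiliary facts about the Japanese bracket -/

lemma jb_pos (x : ℝ) : 0 < jb x := by
  unfold jb; positivity

lemma one_le_jb (x : ℝ) : 1 ≤ jb x := by
  unfold jb; have := abs_nonneg x; linarith

lemma jb_rpow_pos (x t : ℝ) : 0 < jb x ^ t := Real.rpow_pos_of_pos (jb_pos x) t

lemma jb_half_le_two {x : ℝ} (h0 : 0 ≤ x) (h1 : x ≤ 1) : jb x ^ (1/2 : ℝ) ≤ 2 := by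
  have h2 : jb x ^ (1/2 : ℝ) ≤ jb x ^ (1 : ℝ) :=
    Real.rpow_le_rpow_of_exponent_le (one_le_jb x) (by norm_num)
  rw [Real.rpow_one] at h2
  have h3 : jb x ≤ 2 := by unfold jb; rw [abs_of_nonneg h0]; linarith
  linarith

lemma jb_zero : jb 0 = 1 := by unfold jb; simp

/-! ### The counterexample functions -/

/-- `f(τ,n) = |n|⁻¹` on the resonant set `{1 ≤ γ n, τ + n² ∈ [0,1]}`. -/
noncomputable def fct (γ : ℝ) : ℝ × ℤ → ℝ := fun p =>
  if 1 ≤ γ * (p.2 : ℝ) ∧ p.1 + (p.2 : ℝ) ^ 2 ∈ Set.Icc (0:ℝ) 1 then |(p.2 : ℝ)|⁻¹ else 0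

/-- `g = 1` on `{n = 0, τ ∈ [0,1]}`. -/
noncomputable def gct : ℝ × ℤ → ℝ := fun p =>
  if p.2 = 0 ∧ p.1 ∈ Set.Icc (0:ℝ) 1 then 1 else 0

lemma fct_meas (γ : ℝ) : Measurable (fct γ) := by
  unfold fct
  apply Measurable.ite _ (by measurability) measurable_const
  have h1 : MeasurableSet {p : ℝ × ℤ | 1 ≤ γ * (p.2 : ℝ)} :=
    measurableSet_le measurable_const (by measurability)
  have h2 : MeasurableSet {p : ℝ × ℤ | p.1 + (p.2 : ℝ) ^ 2 ∈ Set.Icc (0:ℝ) 1} := by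
    have : Measurable fun p : ℝ × ℤ => p.1 + (p.2 : ℝ) ^ 2 := by measurability
    exact this measurableSet_Icc
  exact h1.inter h2

lemma gct_meas : Measurable gct := by
  unfold gct
  apply Measurable.ite _ measurable_const measurable_const
  have h1 : MeasurableSet {p : ℝ × ℤ | p.2 = 0} := by
    have : Measurable fun p : ℝ × ℤ => p.2 := measurable_snd
    exact this (MeasurableSet.singleton 0)
  have h2 : MeasurableSet {p : ℝ × ℤ | p.1 ∈ Set.Icc (0:ℝ) 1} :=
    measurable_fst measurableSet_Icc
  exact h1.inter h2

lemma fct_nonneg (γ : ℝ) (p : ℝ × ℤ) : 0 ≤ fct γ p := by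
  unfold fct; split <;> positivity

lemma gct_nonneg (p : ℝ × ℤ) : 0 ≤ gct p := by
  unfold gct; split <;> norm_num

/-- Generic L²-in-τ bound for a function supported in an interval. -/
lemma lintegral_sq_le {F : ℝ → ℝ} {a b c : ℝ}
    (h : ∀ τ, F τ ≠ 0 → τ ∈ Set.Icc a b ∧ F τ ≤ c) :
    ∫⁻ τ, ENNReal.ofReal (F τ) ^ 2 ≤ ENNReal.ofReal c ^ 2 * ENNReal.ofReal (b - a) := by
  calc ∫⁻ τ, ENNReal.ofReal (F τ) ^ 2
      ≤ ∫⁻ τ, (Set.Icc a b).indicator (fun _ => ENNReal.ofReal c ^ 2) τ := by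
        apply lintegral_mono; intro τ
        by_cases hF : F τ = 0
        · simp [hF]
        · obtain ⟨hmem, hle⟩ := h τ hF
          rw [Set.indicator_of_mem hmem]
          exact pow_le_pow_left₀ zero_le (ENNReal.ofReal_le_ofReal hle) 2
    _ = ENNReal.ofReal c ^ 2 * volume (Set.Icc a b) :=
        lintegral_indicator_const measurableSet_Icc _
    _ = ENNReal.ofReal c ^ 2 * ENNReal.ofReal (b - a) := by rw [Real.volume_Icc]

lemma fct_l2 (γ : ℝ) : l2RZ (fct γ) ≠ ⊤ := by
  unfold l2RZ
  apply ENNReal.rpow_ne_top_of_nonneg (by norm_num)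
  have key : ∀ n : ℤ, ∫⁻ τ : ℝ, ENNReal.ofReal (fct γ (τ, n)) ^ 2
      ≤ ENNReal.ofReal ((|(n : ℝ)|⁻¹) ^ 2) := by
    intro n
    have h := lintegral_sq_le (F := fun τ => fct γ (τ, n)) (a := -(n:ℝ)^2) (b := 1 - (n:ℝ)^2)
      (c := |(n:ℝ)|⁻¹) ?_
    · calc ∫⁻ τ : ℝ, ENNReal.ofReal (fct γ (τ, n)) ^ 2
          ≤ ENNReal.ofReal (|(n:ℝ)|⁻¹) ^ 2 * ENNReal.ofReal (1 - (n:ℝ)^2 - -(n:ℝ)^2) := h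
        _ = ENNReal.ofReal ((|(n : ℝ)|⁻¹) ^ 2) := by
            rw [ENNReal.ofReal_pow (by positivity)]
            norm_num
    · intro τ hF
      simp only [fct] at hF ⊢
      split_ifs at hF ⊢ with hcond
      · obtain ⟨hc1, hc2⟩ := hcond
        rw [Set.mem_Icc] at hc2
        obtain ⟨h0, h1⟩ := hc2
        exact ⟨Set.mem_Icc.mpr ⟨by linarith, by linarith⟩, le_refl _⟩
      · exact absurd rfl hF
  have hsum : Summable fun n : ℤ => (|(n : ℝ)|⁻¹) ^ 2 := by
    have h2 := (Real.summable_one_div_int_pow (p := 2)).mpr (by norm_num)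
    apply h2.congr
    intro n
    rw [one_div, inv_pow, sq_abs]
  have heq := ENNReal.ofReal_tsum_of_nonneg (fun n : ℤ => by positivity) hsum
  apply ne_top_of_le_ne_top (b := ∑' n : ℤ, ENNReal.ofReal ((|(n : ℝ)|⁻¹) ^ 2))
  · rw [← heq]; exact ENNReal.ofReal_ne_top
  · exact ENNReal.tsum_le_tsum key

lemma gct_l2 : l2RZ gct ≠ ⊤ := by
  unfold l2RZ
  apply ENNReal.rpow_ne_top_of_nonneg (by norm_num)
  have key : ∀ n : ℤ, ∫⁻ τ : ℝ, ENNReal.ofReal (gct (τ, n)) ^ 2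
      ≤ ENNReal.ofReal (if n = 0 then (1:ℝ) else 0) := by
    intro n
    have h := lintegral_sq_le (F := fun τ => gct (τ, n)) (a := (0:ℝ)) (b := 1)
      (c := if n = 0 then (1:ℝ) else 0) ?_
    · calc ∫⁻ τ : ℝ, ENNReal.ofReal (gct (τ, n)) ^ 2
          ≤ ENNReal.ofReal (if n = 0 then (1:ℝ) else 0) ^ 2 * ENNReal.ofReal (1 - 0) := h
        _ = ENNReal.ofReal ((if n = 0 then (1:ℝ) else 0) ^ 2) * 1 := by
            rw [ENNReal.ofReal_pow (by split <;> norm_num)]; norm_num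
        _ = ENNReal.ofReal (if n = 0 then (1:ℝ) else 0) := by
            rw [mul_one]; congr 1; split <;> norm_num
    · intro τ hF
      simp only [gct] at hF ⊢
      split_ifs at hF ⊢ with h1 h2
      · exact ⟨h1.2, le_refl _⟩
      · exact absurd h1.1 h2
      · exact absurd rfl hF
      · exact absurd rfl hF
  have hsum : Summable fun n : ℤ => if n = 0 then (1:ℝ) else 0 := by
    apply summable_of_ne_finset_zero (s := {0})
    intro n hn
    rw [if_neg (by simpa using hn)]
  have heq := ENNReal.ofReal_tsum_of_nonneg (fun n : ℤ => by split <;> norm_num) hsum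
  apply ne_top_of_le_ne_top (b := ∑' n : ℤ, ENNReal.ofReal (if n = 0 then (1:ℝ) else 0))
  · rw [← heq]; exact ENNReal.ofReal_ne_top
  · exact ENNReal.tsum_le_tsum key

/-- Index map picking out the resonant frequencies `n = γ (m+1)`. -/
noncomputable def resIdx (γ : ℝ) (m : ℕ) : ℤ :=
  if γ = 1 then (m : ℤ) + 1 else -((m : ℤ) + 1)

lemma resIdx_inj (γ : ℝ) : Function.Injective (resIdx γ) := by
  intro a b h
  unfold resIdx at h
  split at h <;> omega

lemma resIdx_cast (γ : ℝ) (hγ2 : γ = 1 ∨ γ = -1) (m : ℕ) :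
    ((resIdx γ m : ℤ) : ℝ) = γ * ((m : ℝ) + 1) := by
  rcases hγ2 with h | h
  · unfold resIdx; rw [if_pos h, h]; push_cast; ring
  · unfold resIdx; rw [if_neg (by rw [h]; norm_num), h]; push_cast; ring

theorem main_lb (γ s : ℝ) (hγ2 : γ = 1 ∨ γ = -1) :
    (∑' n : ℤ, ∫⁻ τ : ℝ, (Bγ γ s (fct γ) gct τ n) ^ 2) = ⊤ := by
  have hγsq : γ * γ = 1 := by rcases hγ2 with h | h <;> rw [h] <;> norm_num
  -- the per-frequency lower bound
  have key : ∀ m : ℕ, ENNReal.ofReal ((512 * ((m:ℝ)+1))⁻¹)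
      ≤ ∫⁻ τ : ℝ, (Bγ γ s (fct γ) gct τ (resIdx γ m)) ^ 2 := by
    intro m
    set n : ℤ := resIdx γ m with hn
    set N : ℝ := ((n : ℤ) : ℝ) with hNdef
    set M1 : ℝ := (m : ℝ) + 1 with hM1def
    have hM1 : 0 < M1 := by positivity
    have hcast : N = γ * M1 := resIdx_cast γ hγ2 m
    have habs : |N| = M1 := by
      rcases hγ2 with h | h
      · rw [hcast, h, one_mul, abs_of_pos hM1]
      · rw [hcast, h, show (-1:ℝ) * M1 = -M1 by ring, abs_neg, abs_of_pos hM1]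
    have hNsq : N ^ 2 = M1 ^ 2 := by
      rw [hcast]; linear_combination (M1^2) * hγsq
    have hγN : 1 ≤ γ * N := by rw [hcast, ← mul_assoc, hγsq, one_mul]; linarith
    have hres : γ * |N| * N = N ^ 2 := by rw [habs, hcast]; ring
    set J : ℝ := jb N with hJdef
    have hJpos : 0 < J := jb_pos N
    have hJeq : J = 1 + M1 := by rw [hJdef]; unfold jb; rw [habs]
    have hA : 0 < J ^ s := Real.rpow_pos_of_pos hJpos s
    have hB : 0 < J ^ (s - 1/2) := Real.rpow_pos_of_pos hJpos _
    -- pointwise lower bound on Bγ for τ in the resonant window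
    have hpt : ∀ τ ∈ Set.Icc (-N^2 + 1/2) (-N^2 + 1),
        ENNReal.ofReal (J ^ (1/2:ℝ) / (16 * M1)) ≤ Bγ γ s (fct γ) gct τ n := by
      intro τ hτ
      obtain ⟨hτl, hτr⟩ := hτ
      set c₁ : ℝ := M1⁻¹ / (4 * J ^ (s - 1/2)) with hc₁def
      have hc₁ : 0 ≤ c₁ := le_of_lt (div_pos (inv_pos.mpr hM1) (by linarith))
      -- inner integral lower bound
      have hInt : ENNReal.ofReal c₁ * ENNReal.ofReal (1/2)
          ≤ ∫⁻ τ₁ : ℝ, ENNReal.ofReal (fct γ (τ₁, n) * gct (τ - τ₁, n - n) /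
            (jb (n : ℝ) ^ (s - 1/2) * jb (τ₁ + γ * |(n : ℝ)| * (n : ℝ)) ^ (1/2 : ℝ)
              * jb ((n : ℝ) - (n : ℝ)) ^ s
              * jb (τ - τ₁ + ((n : ℝ) - (n : ℝ)) ^ 2) ^ (1/2 : ℝ))) := by
        calc ENNReal.ofReal c₁ * ENNReal.ofReal (1/2)
            ≤ ENNReal.ofReal c₁ * volume (Set.Icc (-N^2) τ) := by
              rw [Real.volume_Icc]
              exact mul_le_mul_right (ENNReal.ofReal_le_ofReal (by linarith)) _
          _ = ∫⁻ τ₁ : ℝ, (Set.Icc (-N^2) τ).indicator (fun _ => ENNReal.ofReal c₁) τ₁ :=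
              (lintegral_indicator_const measurableSet_Icc _).symm
          _ ≤ _ := by
              apply lintegral_mono
              intro τ₁
              by_cases hmem : τ₁ ∈ Set.Icc (-N^2) τ
              · rw [Set.indicator_of_mem hmem]
                obtain ⟨h1, h2⟩ := hmem
                have hτ₁0 : 0 ≤ τ₁ + N^2 := by linarith
                have hτ₁1 : τ₁ + N^2 ≤ 1 := by linarith
                have hσ0 : 0 ≤ τ - τ₁ := by linarith
                have hσ1 : τ - τ₁ ≤ 1 := by linarith
                have hfv : fct γ (τ₁, n) = M1⁻¹ := by
                  simp only [fct]
                  rw [← hNdef, if_pos ⟨hγN, Set.mem_Icc.mpr ⟨hτ₁0, hτ₁1⟩⟩, habs]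
                have hgv : gct (τ - τ₁, n - n) = 1 := by
                  simp only [gct]
                  rw [if_pos ⟨sub_self n, Set.mem_Icc.mpr ⟨hσ0, hσ1⟩⟩]
                apply ENNReal.ofReal_le_ofReal
                rw [hfv, hgv, ← hNdef, sub_self, hres, jb_zero, Real.one_rpow,
                  show ((0:ℝ))^2 = (0:ℝ) by norm_num, add_zero, ← hJdef]
                have hq₁ : jb (τ₁ + N^2) ^ (1/2:ℝ) ≤ 2 := jb_half_le_two hτ₁0 hτ₁1
                have hq₂ : jb (τ - τ₁) ^ (1/2:ℝ) ≤ 2 := jb_half_le_two hσ0 hσ1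
                have hq₁p : 0 < jb (τ₁ + N^2) ^ (1/2:ℝ) := jb_rpow_pos _ _
                have hq₂p : 0 < jb (τ - τ₁) ^ (1/2:ℝ) := jb_rpow_pos _ _
                set q₁ := jb (τ₁ + N^2) ^ (1/2:ℝ)
                set q₂ := jb (τ - τ₁) ^ (1/2:ℝ)
                have hD : J ^ (s - 1/2) * q₁ * 1 * q₂ ≤ 4 * J ^ (s - 1/2) := by
                  have h4 : q₁ * q₂ ≤ 4 := by
                    nlinarith [mul_le_mul hq₁ hq₂ hq₂p.le (by norm_num : (0:ℝ) ≤ 2)]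
                  calc J ^ (s - 1/2) * q₁ * 1 * q₂ = J ^ (s - 1/2) * (q₁ * q₂) := by ring
                    _ ≤ J ^ (s - 1/2) * 4 := mul_le_mul_of_nonneg_left h4 hB.le
                    _ = 4 * J ^ (s - 1/2) := by ring
                have hDpos : 0 < J ^ (s - 1/2) * q₁ * 1 * q₂ :=
                  mul_pos (mul_pos (mul_pos hB hq₁p) one_pos) hq₂p
                rw [hc₁def, div_le_div_iff₀ (by linarith) hDpos]
                calc M1⁻¹ * (J ^ (s - 1/2) * q₁ * 1 * q₂) ≤ M1⁻¹ * (4 * J ^ (s - 1/2)) :=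
                      mul_le_mul_of_nonneg_left hD (inv_nonneg.mpr hM1.le)
                  _ = M1⁻¹ * 1 * (4 * J ^ (s - 1/2)) := by ring
              · rw [Set.indicator_of_notMem hmem]; exact zero_le
      -- combine with the prefactor
      have hq : jb (τ + N^2) ^ (1/2:ℝ) ≤ 2 := jb_half_le_two (by linarith) (by linarith)
      have hqp : 0 < jb (τ + N^2) ^ (1/2:ℝ) := jb_rpow_pos _ _
      set q := jb (τ + N^2) ^ (1/2:ℝ) with hqdef
      have hT : 0 < J ^ s / J ^ (s - 1/2) := div_pos hA hB
      have hhalf : J ^ s / J ^ (s - 1/2) = J ^ (1/2:ℝ) := by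
        rw [← Real.rpow_sub hJpos]; congr 1; ring
      calc ENNReal.ofReal (J ^ (1/2:ℝ) / (16 * M1))
          ≤ ENNReal.ofReal ((J ^ s / q) * (c₁ * (1/2))) := by
            apply ENNReal.ofReal_le_ofReal
            have hqinv : (2:ℝ)⁻¹ ≤ q⁻¹ := inv_anti₀ hqp hq
            have e2 : (J ^ s / q) * (c₁ * (1/2))
                = (J ^ s / J ^ (s - 1/2)) * (M1⁻¹ * (q⁻¹ * 8⁻¹)) := by
              rw [hc₁def, div_eq_mul_inv, div_eq_mul_inv, div_eq_mul_inv, mul_inv]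
              ring
            have e1 : J ^ (1/2:ℝ) / (16 * M1)
                = (J ^ s / J ^ (s - 1/2)) * (M1⁻¹ * (2⁻¹ * 8⁻¹)) := by
              rw [hhalf, div_eq_mul_inv, mul_inv]
              ring
            rw [e1, e2]
            apply mul_le_mul_of_nonneg_left _ hT.le
            apply mul_le_mul_of_nonneg_left _ (inv_nonneg.mpr hM1.le)
            exact mul_le_mul_of_nonneg_right hqinv (by norm_num)
        _ = ENNReal.ofReal (J ^ s / q) * (ENNReal.ofReal c₁ * ENNReal.ofReal (1/2)) := by
            rw [ENNReal.ofReal_mul (div_nonneg hA.le hqp.le), ENNReal.ofReal_mul hc₁]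
        _ ≤ Bγ γ s (fct γ) gct τ n := by
            simp only [Bγ]
            exact mul_le_mul_right (hInt.trans (ENNReal.le_tsum n)) _
    -- integrate the pointwise bound over the window
    have hsq : ∀ τ ∈ Set.Icc (-N^2 + 1/2) (-N^2 + 1),
        ENNReal.ofReal ((256 * M1)⁻¹) ≤ (Bγ γ s (fct γ) gct τ n) ^ 2 := by
      intro τ hτ
      have h1 := hpt τ hτ
      have h2 : ENNReal.ofReal (J ^ (1/2:ℝ) / (16 * M1)) ^ 2 ≤ (Bγ γ s (fct γ) gct τ n) ^ 2 :=
        pow_le_pow_left₀ zero_le h1 2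
      refine le_trans ?_ h2
      rw [← ENNReal.ofReal_pow (div_nonneg (jb_rpow_pos N _).le (by linarith : (0:ℝ) ≤ 16 * M1))]
      apply ENNReal.ofReal_le_ofReal
      have hsqrt : (J ^ (1/2:ℝ)) ^ 2 = J := by
        rw [← Real.rpow_natCast (J ^ (1/2:ℝ)) 2, ← Real.rpow_mul hJpos.le]
        norm_num
      rw [div_pow, hsqrt]
      have hp1 : (0:ℝ) < 256 * M1 := by linarith
      have hp2 : (0:ℝ) < (16 * M1) ^ 2 := by nlinarith [hM1]
      rw [inv_eq_one_div, div_le_div_iff₀ hp1 hp2]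
      nlinarith [hM1, hJeq, mul_pos hM1 hM1]
    calc ENNReal.ofReal ((512 * M1)⁻¹)
        = ENNReal.ofReal ((256 * M1)⁻¹) * ENNReal.ofReal (-N^2 + 1 - (-N^2 + 1/2)) := by
          rw [← ENNReal.ofReal_mul (inv_nonneg.mpr (by linarith : (0:ℝ) ≤ 256 * M1))]
          congr 1
          rw [show -N^2 + 1 - (-N^2 + 1/2) = (2:ℝ)⁻¹ by ring, mul_inv, mul_inv]
          ring
      _ = ENNReal.ofReal ((256 * M1)⁻¹) * volume (Set.Icc (-N^2 + 1/2) (-N^2 + 1)) := by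
          rw [Real.volume_Icc]
      _ = ∫⁻ τ : ℝ, (Set.Icc (-N^2 + 1/2) (-N^2 + 1)).indicator
            (fun _ => ENNReal.ofReal ((256 * M1)⁻¹)) τ :=
          (lintegral_indicator_const measurableSet_Icc _).symm
      _ ≤ ∫⁻ τ : ℝ, (Bγ γ s (fct γ) gct τ n) ^ 2 := by
          apply lintegral_mono
          intro τ
          by_cases hmem : τ ∈ Set.Icc (-N^2 + 1/2) (-N^2 + 1)
          · rw [Set.indicator_of_mem hmem]; exact hsq τ hmem
          · rw [Set.indicator_of_notMem hmem]; exact zero_le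
  -- sum the lower bounds: harmonic series diverges
  have hge : ∑' m : ℕ, ENNReal.ofReal ((512 * ((m:ℝ)+1))⁻¹)
      ≤ ∑' n : ℤ, ∫⁻ τ : ℝ, (Bγ γ s (fct γ) gct τ n) ^ 2 := by
    calc ∑' m : ℕ, ENNReal.ofReal ((512 * ((m:ℝ)+1))⁻¹)
        ≤ ∑' m : ℕ, ∫⁻ τ : ℝ, (Bγ γ s (fct γ) gct τ (resIdx γ m)) ^ 2 :=
          ENNReal.tsum_le_tsum key
      _ ≤ ∑' n : ℤ, ∫⁻ τ : ℝ, (Bγ γ s (fct γ) gct τ n) ^ 2 :=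
          ENNReal.tsum_comp_le_tsum_of_injective (resIdx_inj γ) _
  have htop : ∑' m : ℕ, ENNReal.ofReal ((512 * ((m:ℝ)+1))⁻¹) = ⊤ := by
    by_contra h
    have hsumm := ENNReal.summable_toReal h
    have hsumm2 : Summable fun m : ℕ => (512 * ((m:ℝ)+1))⁻¹ := by
      apply hsumm.congr
      intro m
      rw [ENNReal.toReal_ofReal (by positivity)]
    have hsumm3 : Summable fun m : ℕ => ((m:ℝ)+1)⁻¹ := by
      have h512 := hsumm2.mul_left (512:ℝ)
      apply h512.congr
      intro m
      rw [mul_inv, ← mul_assoc, mul_inv_cancel₀ (by norm_num : (512:ℝ) ≠ 0), one_mul]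
    have hsumm4 : Summable fun m : ℕ => 1 / ((m+1 : ℕ) : ℝ) := by
      apply hsumm3.congr
      intro m
      push_cast
      rw [one_div]
    exact Real.not_summable_one_div_natCast ((summable_nat_add_iff 1).mp hsumm4)
  exact top_unique (htop ▸ hge)

/-- For `|γ| = 1` and arbitrary `s ∈ ℝ`, the bilinear estimate for `B_γ` fails. -/
theorem periodic_bilinear_estimate_X_fails_gamma_one (γ s : ℝ) (hγ1 : |γ| = 1) :
    ∀ C : ℝ, 0 < C → ∃ f g : ℝ × ℤ → ℝ,
      Measurable f ∧ Measurable g ∧ (∀ p, 0 ≤ f p) ∧ (∀ p, 0 ≤ g p) ∧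
      l2RZ f ≠ ⊤ ∧ l2RZ g ≠ ⊤ ∧
      ENNReal.ofReal C * l2RZ f * l2RZ g <
        (∑' n : ℤ, ∫⁻ τ : ℝ, (Bγ γ s f g τ n) ^ 2) ^ (1/2 : ℝ) := by
  intro C hC
  have hγ2 : γ = 1 ∨ γ = -1 := (abs_eq (by norm_num)).mp hγ1
  refine ⟨fct γ, gct, fct_meas γ, gct_meas, fct_nonneg γ, gct_nonneg,
    fct_l2 γ, gct_l2, ?_⟩
  rw [main_lb γ s hγ2, ENNReal.top_rpow_of_pos (by norm_num)]
  exact lt_top_iff_ne_top.mpr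
    (ENNReal.mul_ne_top (ENNReal.mul_ne_top ENNReal.ofReal_ne_top (fct_l2 γ)) gct_l2)
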